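/- Let J be the greedy index set determined by θ ∈ [0,1] and the residual r = b − Ax with Aᵀr ≠ 0, and let x' = x + I_J A_J† (b − Ax). Then ‖x' − x⋆‖²_{AᵀA} ≤ ‖x − x⋆‖²_{AᵀA} − (‖A_J‖_F² / σ_max(A_J)²) · ε · ‖Aᵀr‖₂². -/

import Mathlib

noncomputable section
open Matrix

/-- Squared Euclidean norm `‖v‖₂²` of a vector. -/
def norm2 {ι : Type*} [Fintype ι] (v : ι → ℝ) : ℝ := ∑ i, (v i) ^ 2

/-- Squared Frobenius norm `‖A‖_F²` of a matrix. -/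
def frob2 {ι κ : Type*} [Fintype ι] [Fintype κ] (A : Matrix ι κ ℝ) : ℝ :=
  ∑ i, ∑ j, (A i j) ^ 2

theorem Matrix.isHermitian_transpose_mul_self {ι κ : Type*} [Fintype ι]
    (B : Matrix ι κ ℝ) : (Bᵀ * B).IsHermitian := by
  simpa [Matrix.conjTranspose_eq_transpose_of_trivial] using
    Matrix.isHermitian_conjTranspose_mul_self B

/-- Squared largest singular value `σ_max(B)²`, i.e. the largest eigenvalue of `Bᵀ * B`. -/
def sigmaMaxSq {ι κ : Type*} [Fintype ι] [Fintype κ] [DecidableEq κ]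
    (B : Matrix ι κ ℝ) : ℝ :=
  sSup (Set.range (Matrix.isHermitian_transpose_mul_self B).eigenvalues)

/-- Squared smallest singular value `σ_min(B)²`, i.e. the smallest eigenvalue of `Bᵀ * B`. -/
def sigmaMinSq {ι κ : Type*} [Fintype ι] [Fintype κ] [DecidableEq κ]
    (B : Matrix ι κ ℝ) : ℝ :=
  sInf (Set.range (Matrix.isHermitian_transpose_mul_self B).eigenvalues)

/-- Squared Euclidean norm `‖A_(j)‖₂²` of the `j`-th column of `A`. -/
def col2 {m n : ℕ} (A : Matrix (Fin m) (Fin n) ℝ) (j : Fin n) : ℝ := ∑ i, (A i j) ^ 2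

/-- `A` has full column rank: its columns are linearly independent. -/
def FullColRank {m n : ℕ} (A : Matrix (Fin m) (Fin n) ℝ) : Prop :=
  LinearIndependent ℝ fun j : Fin n => (fun i => A i j : Fin m → ℝ)

/-- `max_{1 ≤ j ≤ n} |A_(j)ᵀ r|² / ‖A_(j)‖₂²`. -/
def maxRatio {m n : ℕ} (A : Matrix (Fin m) (Fin n) ℝ) (r : Fin m → ℝ) : ℝ :=
  ⨆ j : Fin n, ((Aᵀ *ᵥ r) j) ^ 2 / col2 A j

/-- The greedy parameter
`ε = (θ/‖Aᵀr‖₂²)·max_j |A_(j)ᵀ r|²/‖A_(j)‖₂² + (1−θ)/‖A‖_F²`. -/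
def eps {m n : ℕ} (A : Matrix (Fin m) (Fin n) ℝ) (r : Fin m → ℝ) (θ : ℝ) : ℝ :=
  θ / norm2 (Aᵀ *ᵥ r) * maxRatio A r + (1 - θ) / frob2 A

open Classical in
/-- The greedy index set `J = { j : |A_(j)ᵀ r|² ≥ ε ‖Aᵀr‖₂² ‖A_(j)‖₂² }`. -/
def greedySet {m n : ℕ} (A : Matrix (Fin m) (Fin n) ℝ) (r : Fin m → ℝ) (θ : ℝ) :
    Finset (Fin n) :=
  Finset.univ.filter fun j =>
    eps A r θ * norm2 (Aᵀ *ᵥ r) * col2 A j ≤ ((Aᵀ *ᵥ r) j) ^ 2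

/-- The column submatrix `A_J` of `A`, with columns indexed by `J`. -/
def subCols {m n : ℕ} (A : Matrix (Fin m) (Fin n) ℝ) (J : Finset (Fin n)) :
    Matrix (Fin m) {j // j ∈ J} ℝ :=
  A.submatrix id fun j => (j : Fin n)

/-- The submatrix `I_J` of the `n × n` identity with columns indexed by `J`. -/
def subId {n : ℕ} (J : Finset (Fin n)) : Matrix (Fin n) {j // j ∈ J} ℝ :=
  (1 : Matrix (Fin n) (Fin n) ℝ).submatrix id fun j => (j : Fin n)

/-- Moore–Penrose pseudoinverse of a full-column-rank matrix: `B† = (BᵀB)⁻¹Bᵀ`. -/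
def pinv {ι κ : Type*} [Fintype ι] [Fintype κ] [DecidableEq κ] (B : Matrix ι κ ℝ) :
    Matrix κ ι ℝ :=
  (Bᵀ * B)⁻¹ * Bᵀ

/-- The matrix `Ã_J` whose columns are the normalized columns `A_(j)/‖A_(j)‖₂`, `j ∈ J`. -/
def tildeA {m n : ℕ} (A : Matrix (Fin m) (Fin n) ℝ) (J : Finset (Fin n)) :
    Matrix (Fin m) {j // j ∈ J} ℝ :=
  Matrix.of fun i j => A i (j : Fin n) / Real.sqrt (col2 A (j : Fin n))

/-- The matrix `Ĩ_J` whose columns are `e_j/‖A_(j)‖₂`, `j ∈ J`. -/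
def tildeI {m n : ℕ} (A : Matrix (Fin m) (Fin n) ℝ) (J : Finset (Fin n)) :
    Matrix (Fin n) {j // j ∈ J} ℝ :=
  Matrix.of fun i j => (if i = (j : Fin n) then 1 else 0) / Real.sqrt (col2 A (j : Fin n))

/-!
With `B = A_J` and `t = B† r`, the update gives `A (x' - x⋆) = A (x - x⋆) + B t`, where `t` solves
the normal equation `BᵀB t = Bᵀ r = -Bᵀ A (x - x⋆)`; expanding the square, the energy error drops
by exactly `‖B t‖²`. Using `B` as a square root of `BᵀB`, Cauchy–Schwarz and the Rayleigh bound
give `‖BᵀB t‖² ≤ σ_max(B)² ‖B t‖²`. Finally each greedy column satisfies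
`|A_(j)ᵀ r|² ≥ ε ‖Aᵀr‖₂² ‖A_(j)‖₂²`, and summing over `J` gives `‖Bᵀ r‖² ≥ ε ‖Aᵀr‖₂² ‖B‖_F²`.
-/

theorem norm2_eq_dotProduct {ι : Type*} [Fintype ι] (v : ι → ℝ) : norm2 v = v ⬝ᵥ v :=
  Finset.sum_congr rfl fun i _ => sq (v i)

theorem norm2_nonneg {ι : Type*} [Fintype ι] (v : ι → ℝ) : 0 ≤ norm2 v :=
  Finset.sum_nonneg fun i _ => sq_nonneg (v i)

open MatrixOrder in
theorem Matrix.IsHermitian.dotProduct_mulVec_le_of_eigenvalues_le {κ : Type*} [Fintype κ]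
    [DecidableEq κ] {M : Matrix κ κ ℝ} (hM : M.IsHermitian) {c : ℝ}
    (hc : ∀ i, hM.eigenvalues i ≤ c) (v : κ → ℝ) : v ⬝ᵥ (M *ᵥ v) ≤ c * (v ⬝ᵥ v) := by
  have hle : M ≤ algebraMap ℝ _ c := by
    refine le_algebraMap_of_spectrum_le (fun x hx => ?_) hM.isSelfAdjoint
    rw [hM.spectrum_real_eq_range_eigenvalues] at hx
    obtain ⟨i, rfl⟩ := hx
    exact hc i
  simpa [sub_mulVec, Algebra.algebraMap_eq_smul_one, smul_mulVec, dotProduct_sub] using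
    (Matrix.le_iff.mp hle).dotProduct_mulVec_nonneg v

section Gram

variable {ι κ : Type*} [Fintype ι] [Fintype κ]

theorem norm2_add_mulVec_of_normal_equation (B : Matrix ι κ ℝ) {w : ι → ℝ} {t : κ → ℝ}
    (h : (Bᵀ * B) *ᵥ t = -(Bᵀ *ᵥ w)) : norm2 (w + B *ᵥ t) = norm2 w - norm2 (B *ᵥ t) := by
  have hcross : w ⬝ᵥ (B *ᵥ t) = -((B *ᵥ t) ⬝ᵥ (B *ᵥ t)) := by
    rw [← dotProduct_transpose_mulVec B t w, ← dotProduct_transpose_mulVec B t, mulVec_mulVec, h,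
      dotProduct_neg, neg_neg]
  simp only [norm2_eq_dotProduct, add_dotProduct, dotProduct_add, dotProduct_comm (B *ᵥ t) w,
    hcross]
  ring

variable [DecidableEq κ]

theorem transpose_mul_self_mulVec_pinv {B : Matrix ι κ ℝ} (hB : IsUnit (Bᵀ * B).det)
    (r : ι → ℝ) : (Bᵀ * B) *ᵥ (pinv B *ᵥ r) = Bᵀ *ᵥ r := by
  rw [pinv, mulVec_mulVec, ← Matrix.mul_assoc, mul_nonsing_inv _ hB, Matrix.one_mul]

theorem eigenvalues_le_sigmaMaxSq (B : Matrix ι κ ℝ) (i : κ) :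
    (Matrix.isHermitian_transpose_mul_self B).eigenvalues i ≤ sigmaMaxSq B :=
  le_csSup (Set.finite_range _).bddAbove ⟨i, rfl⟩

theorem sigmaMaxSq_nonneg (B : Matrix ι κ ℝ) : 0 ≤ sigmaMaxSq B :=
  Real.sSup_nonneg fun _ ⟨i, hi⟩ => hi ▸ Matrix.eigenvalues_conjTranspose_mul_self_nonneg B i

theorem norm2_transpose_mul_self_mulVec_le (B : Matrix ι κ ℝ) (t : κ → ℝ) :
    norm2 ((Bᵀ * B) *ᵥ t) ≤ sigmaMaxSq B * norm2 (B *ᵥ t) := by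
  rw [← mulVec_mulVec]
  set u := Bᵀ *ᵥ (B *ᵥ t) with hu_def
  have hcs : norm2 u ^ 2 ≤ norm2 (B *ᵥ t) * norm2 (B *ᵥ u) := by
    have hu : norm2 u = ∑ i, (B *ᵥ t) i * (B *ᵥ u) i := by
      rw [norm2_eq_dotProduct]
      nth_rw 2 [hu_def]
      rw [dotProduct_transpose_mulVec B u]
      rfl
    rw [hu]
    exact Finset.sum_mul_sq_le_sq_mul_sq Finset.univ (B *ᵥ t) (B *ᵥ u)
  have hray : norm2 (B *ᵥ u) ≤ sigmaMaxSq B * norm2 u := by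
    rw [norm2_eq_dotProduct, norm2_eq_dotProduct, ← dotProduct_transpose_mulVec B u,
      mulVec_mulVec]
    exact (Matrix.isHermitian_transpose_mul_self B).dotProduct_mulVec_le_of_eigenvalues_le
      (eigenvalues_le_sigmaMaxSq B) u
  rcases (norm2_nonneg u).eq_or_lt with hu0 | hupos
  · rw [← hu0]
    exact mul_nonneg (sigmaMaxSq_nonneg B) (norm2_nonneg _)
  · refine le_of_mul_le_mul_left ?_ hupos
    calc norm2 u * norm2 u = norm2 u ^ 2 := (sq _).symm
      _ ≤ norm2 (B *ᵥ t) * (sigmaMaxSq B * norm2 u) :=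
        hcs.trans (mul_le_mul_of_nonneg_left hray (norm2_nonneg _))
      _ = norm2 u * (sigmaMaxSq B * norm2 (B *ᵥ t)) := by ring

theorem frob2_div_sigmaMaxSq_mul_le {B : Matrix ι κ ℝ} {t : κ → ℝ} {c : ℝ}
    (hc : c * frob2 B ≤ norm2 ((Bᵀ * B) *ᵥ t)) :
    frob2 B / sigmaMaxSq B * c ≤ norm2 (B *ᵥ t) := by
  rcases (sigmaMaxSq_nonneg B).eq_or_lt with hσ | hσ
  · rw [← hσ, div_zero, zero_mul]
    exact norm2_nonneg _
  · rw [div_mul_eq_mul_div, div_le_iff₀ hσ, mul_comm (norm2 _)]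
    linarith [norm2_transpose_mul_self_mulVec_le B t]

end Gram

theorem FullColRank.isUnit_det_transpose_mul_self_subCols {m n : ℕ}
    {A : Matrix (Fin m) (Fin n) ℝ} (hA : FullColRank A) (J : Finset (Fin n)) :
    IsUnit ((subCols A J)ᵀ * subCols A J).det := by
  have hinj : Function.Injective (subCols A J).mulVec :=
    mulVec_injective_iff.mpr (hA.comp _ Subtype.val_injective)
  simpa [conjTranspose_eq_transpose_of_trivial] using
    ((PosDef.conjTranspose_mul_self _ hinj).isUnit).map Matrix.detMonoidHom

section ColumnBlocks

variable {m n : ℕ} (A : Matrix (Fin m) (Fin n) ℝ) (J : Finset (Fin n))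

theorem mul_subId : A * subId J = subCols A J := by
  ext i j
  simp [Matrix.mul_apply, subId, subCols, Matrix.one_apply]

theorem transpose_subCols_mulVec_apply (v : Fin m → ℝ) (j : {j // j ∈ J}) :
    ((subCols A J)ᵀ *ᵥ v) j = (Aᵀ *ᵥ v) j :=
  rfl

theorem frob2_subCols : frob2 (subCols A J) = ∑ j : {j // j ∈ J}, col2 A j := by
  rw [frob2, Finset.sum_comm]
  rfl

theorem eps_mul_frob2_le_of_subset_greedySet {r : Fin m → ℝ} {θ : ℝ}
    (hJ : J ⊆ greedySet A r θ) :
    eps A r θ * norm2 (Aᵀ *ᵥ r) * frob2 (subCols A J) ≤ norm2 ((subCols A J)ᵀ *ᵥ r) := by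
  rw [frob2_subCols, Finset.mul_sum, norm2]
  refine Finset.sum_le_sum fun j _ => ?_
  have hj := hJ j.2
  unfold greedySet at hj
  exact (Finset.mem_filter.mp hj).2

end ColumnBlocks

theorem stmt5_general {m n : ℕ} (A : Matrix (Fin m) (Fin n) ℝ) (hA : FullColRank A)
    (b : Fin m → ℝ) (xstar : Fin n → ℝ) (hstar : (Aᵀ * A) *ᵥ xstar = Aᵀ *ᵥ b)
    (θ : ℝ) (x : Fin n → ℝ)
    (r : Fin m → ℝ) (hr : r = b - A *ᵥ x)
    (J : Finset (Fin n)) (hJ : J = greedySet A r θ) (x' : Fin n → ℝ)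
    (hx' : x' = x + subId J *ᵥ (pinv (subCols A J) *ᵥ (b - A *ᵥ x))) :
    norm2 (A *ᵥ (x' - xstar)) ≤
      norm2 (A *ᵥ (x - xstar)) -
        frob2 (subCols A J) / sigmaMaxSq (subCols A J) *
          (eps A r θ * norm2 (Aᵀ *ᵥ r)) := by
  set B := subCols A J
  set t := pinv B *ᵥ r
  have hnormal : (Bᵀ * B) *ᵥ t = Bᵀ *ᵥ r :=
    transpose_mul_self_mulVec_pinv (hA.isUnit_det_transpose_mul_self_subCols J) r
  have hAw : Aᵀ *ᵥ (A *ᵥ (x - xstar)) = -(Aᵀ *ᵥ r) := by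
    rw [mulVec_mulVec, mulVec_sub, hstar, hr, mulVec_sub, mulVec_mulVec, neg_sub]
  have hBw : Bᵀ *ᵥ (A *ᵥ (x - xstar)) = -(Bᵀ *ᵥ r) := by
    funext j
    simp only [B, transpose_subCols_mulVec_apply, hAw, Pi.neg_apply]
  have hstep : A *ᵥ (x' - xstar) = A *ᵥ (x - xstar) + B *ᵥ t := by
    rw [hx', ← hr, add_sub_right_comm, mulVec_add, mulVec_mulVec, mul_subId]
  rw [hstep, norm2_add_mulVec_of_normal_equation B (hnormal.trans (by rw [hBw, neg_neg]))]
  refine sub_le_sub_left (frob2_div_sigmaMaxSq_mul_le ?_) _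
  rw [hnormal]
  exact eps_mul_frob2_le_of_subset_greedySet A J hJ.subset

/-- one-step bound for the GBGS update with the greedy index set:
`‖x' − x⋆‖²_{AᵀA} ≤ ‖x − x⋆‖²_{AᵀA} − (‖A_J‖_F²/σ_max(A_J)²) ε ‖Aᵀr‖₂²`. -/
theorem stmt5 {m n : ℕ} (A : Matrix (Fin m) (Fin n) ℝ) (hA : FullColRank A)
    (b : Fin m → ℝ) (xstar : Fin n → ℝ) (hstar : (Aᵀ * A) *ᵥ xstar = Aᵀ *ᵥ b)
    (θ : ℝ) (hθ : θ ∈ Set.Icc (0 : ℝ) 1) (x : Fin n → ℝ)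
    (r : Fin m → ℝ) (hr : r = b - A *ᵥ x) (hr0 : Aᵀ *ᵥ r ≠ 0)
    (J : Finset (Fin n)) (hJ : J = greedySet A r θ) (x' : Fin n → ℝ)
    (hx' : x' = x + subId J *ᵥ (pinv (subCols A J) *ᵥ (b - A *ᵥ x))) :
    norm2 (A *ᵥ (x' - xstar)) ≤
      norm2 (A *ᵥ (x - xstar)) -
        frob2 (subCols A J) / sigmaMaxSq (subCols A J) *
          (eps A r θ * norm2 (Aᵀ *ᵥ r)) :=
  stmt5_general A hA b xstar hstar θ x r hr J hJ x' hx'
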